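/- Let A_i be a von Neumann algebra on a Hilbert space H_i and N_i ⊆ A_i a von Neumann subalgebra, i = 1,2. Let A be a von Neumann algebra with N_1 ⊗̄ N_2 ⊆ A ⊆ A_1 ⊗̄ A_2. If there is a conditional expectation E from A_1 ⊗̄ A_2 onto A, then E restricts to a conditional expectation from (N_1' ∩ A_1) ⊗̄ A_2 onto ((N_1' ∩ A_1) ⊗̄ A_2) ∩ A. -/

import Mathlib

open scoped ComplexOrder

noncomputable section

variable {H : Type*} [NormedAddCommGroup H] [InnerProductSpace ℂ H] [CompleteSpace H]

/-- A conditional expectation (norm-one projection) from the subset `M` of `B(H)`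
onto the subset `N`. -/
structure IsCondExp (M N : Set (H →L[ℂ] H)) (E : (H →L[ℂ] H) → (H →L[ℂ] H)) : Prop where
  subset : N ⊆ M
  mapsTo : ∀ x ∈ M, E x ∈ N
  fixes : ∀ x ∈ N, E x = x
  map_add : ∀ x ∈ M, ∀ y ∈ M, E (x + y) = E x + E y
  map_smul : ∀ (c : ℂ), ∀ x ∈ M, E (c • x) = c • E x
  norm_le : ∀ x ∈ M, ‖E x‖ ≤ ‖x‖
  bimodule : ∀ s₁ ∈ N, ∀ s₂ ∈ N, ∀ t ∈ M, E (s₁ * t * s₂) = s₁ * E t * s₂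

/-- A von Neumann algebra is injective if there is a norm-one projection (conditional
expectation) from all of `B(H)` onto it. -/
def IsInjectiveVN (B : VonNeumannAlgebra H) : Prop :=
  ∃ E, IsCondExp Set.univ (B : Set (H →L[ℂ] H)) E

/-- `B` is a maximal injective von Neumann subalgebra of `M`: `B` is injective and maximal
with respect to inclusion among injective von Neumann subalgebras of `M`. -/
def MaximalInjective (B M : VonNeumannAlgebra H) : Prop :=
  B ≤ M ∧ IsInjectiveVN B ∧
    ∀ C : VonNeumannAlgebra H, C ≤ M → IsInjectiveVN C → B ≤ C → C = B

/-- `A` is a minimal injective von Neumann algebra extension of `N`. -/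
def MinimalInjectiveExtension (A N : VonNeumannAlgebra H) : Prop :=
  N ≤ A ∧ IsInjectiveVN A ∧
    ∀ C : VonNeumannAlgebra H, N ≤ C → C ≤ A → IsInjectiveVN C → C = A

/-- A von Neumann algebra is a factor if its center consists of scalar multiples
of the identity. -/
def IsFactor (M : VonNeumannAlgebra H) : Prop :=
  (M : Set (H →L[ℂ] H)) ∩ (M.commutant : Set (H →L[ℂ] H))
    = Set.range (fun c : ℂ => c • (1 : H →L[ℂ] H))

/-- `R` is a maximal injective subfactor of `M`: an injective subfactor of `M` maximal
with respect to inclusion among injective subfactors of `M`. -/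
def MaximalInjectiveSubfactor (R M : VonNeumannAlgebra H) : Prop :=
  R ≤ M ∧ IsFactor R ∧ IsInjectiveVN R ∧
    ∀ C : VonNeumannAlgebra H, C ≤ M → IsFactor C → IsInjectiveVN C → R ≤ C → C = R

variable (H) (K L : Type*) [NormedAddCommGroup K] [InnerProductSpace ℂ K] [CompleteSpace K]
  [NormedAddCommGroup L] [InnerProductSpace ℂ L] [CompleteSpace L]

/-- An abstract presentation of the spatial tensor product `B(H) ⊗̄ B(K)` acting on a
Hilbert space `L` (playing the role of `H ⊗ K`): two commuting, injective, unital normal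
*-embeddings whose ranges jointly generate `B(L)`, satisfying the commutation theorem for
tensor products of von Neumann algebras. -/
structure VNTensor where
  π₁ : (H →L[ℂ] H) →⋆ₐ[ℂ] (L →L[ℂ] L)
  π₂ : (K →L[ℂ] K) →⋆ₐ[ℂ] (L →L[ℂ] L)
  injective₁ : Function.Injective π₁
  injective₂ : Function.Injective π₂
  commutes : ∀ x y, π₁ x * π₂ y = π₂ y * π₁ x
  generates : Set.centralizer (Set.range ⇑π₁ ∪ Set.range ⇑π₂)
      = Set.range (fun c : ℂ => c • (1 : L →L[ℂ] L))
  commutation : ∀ (M₁ : VonNeumannAlgebra H) (M₂ : VonNeumannAlgebra K),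
    Set.centralizer (⇑π₁ '' (M₁ : Set (H →L[ℂ] H)) ∪ ⇑π₂ '' (M₂ : Set (K →L[ℂ] K)))
      = Set.centralizer (Set.centralizer
          (⇑π₁ '' (M₁.commutant : Set (H →L[ℂ] H)) ∪
            ⇑π₂ '' (M₂.commutant : Set (K →L[ℂ] K))))

variable {H K L}

/-- The von Neumann tensor product `S ⊗̄ T ⊆ B(L)` of `S ⊆ B(H)` and `T ⊆ B(K)`:
the von Neumann algebra (double centralizer) generated by the two images. -/
def VNTensor.tprod (e : VNTensor H K L) (S : Set (H →L[ℂ] H)) (T : Set (K →L[ℂ] K)) :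
    Set (L →L[ℂ] L) :=
  Set.centralizer (Set.centralizer (⇑e.π₁ '' S ∪ ⇑e.π₂ '' T))

/-- Injectivity for a subset of `B(L)` (e.g. a von Neumann tensor product):
existence of a conditional expectation from `B(L)` onto it. -/
def IsInjectiveSet (S : Set (L →L[ℂ] L)) : Prop :=
  ∃ E, IsCondExp Set.univ S E

/-- `S` is a maximal injective von Neumann subalgebra of `Ms`, at the level of subsets
of `B(L)`. -/
def MaximalInjectiveSet (S Ms : Set (L →L[ℂ] L)) : Prop :=
  S ⊆ Ms ∧ IsInjectiveSet S ∧
    ∀ C : VonNeumannAlgebra L, (C : Set (L →L[ℂ] L)) ⊆ Ms →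
      IsInjectiveVN C → S ⊆ (C : Set (L →L[ℂ] L)) → (C : Set (L →L[ℂ] L)) = S


/-!
Since `A ⊆ A₁ ⊗̄ A₂ = (A₁' ⊗̄ A₂')'`, every `E x` commutes with `π₁(A₁')` and `π₂(A₂')`, and for
`x ∈ (N₁' ∩ A₁) ⊗̄ A₂` the bimodule property of `E` shows that `E x` also commutes with `π₁(N₁)`.
By the commutation theorem, `(N₁' ∩ A₁) ⊗̄ A₂` is the commutant of `π₁((N₁ ∪ A₁')'') ∪ π₂(A₂')`,
so it remains to pass from `N₁ ∪ A₁'` to its bicommutant in the first leg. This is a slice map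
argument: compressing an operator `u` that commutes with `π₁(S)` by the maps
`ξ ↦ π₁(|ξ⟩⟨ξ₀|) ζ` gives elements of `S'`, which commute with `S''`; and these maps have dense
joint range because `π₁(B(H)) ∪ π₂(B(K))` acts irreducibly on `L`.
-/

open ContinuousLinearMap InnerProductSpace Module.End Set
open scoped CStarAlgebra

namespace Submodule

variable {𝕜 E : Type*} [RCLike 𝕜] [NormedAddCommGroup E] [InnerProductSpace 𝕜 E] [CompleteSpace E]

theorem commute_starProjection_of_mem_invtSubmodule {U : Submodule 𝕜 E}
    [U.HasOrthogonalProjection] {T : E →L[𝕜] E} (hT : U ∈ invtSubmodule T)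
    (hT' : U ∈ invtSubmodule (adjoint T)) : Commute U.starProjection T := by
  rw [U.isIdempotentElem_starProjection.commute_iff, range_starProjection, ker_starProjection]
  exact ⟨hT, orthogonal_mem_invtSubmodule hT'⟩

theorem eq_top_of_forall_mem_invtSubmodule {R : Set (E →L[𝕜] E)}
    (hR_adjoint : ∀ T ∈ R, adjoint T ∈ R)
    (hR : centralizer R ⊆ range fun c : 𝕜 => c • (1 : E →L[𝕜] E))
    {U : Submodule 𝕜 E} (hU : IsClosed (U : Set E)) (hinv : ∀ T ∈ R, U ∈ invtSubmodule T)
    (hne : U ≠ ⊥) : U = ⊤ := by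
  have : CompleteSpace U := hU.completeSpace_coe
  obtain ⟨c, hc : c • 1 = U.starProjection⟩ := hR fun T hT =>
    (commute_starProjection_of_mem_invtSubmodule (hinv T hT) (hinv _ (hR_adjoint T hT))).eq.symm
  obtain ⟨v, hvU, hv⟩ := exists_mem_ne_zero_of_ne_bot hne
  have hc1 : c = 1 := by
    refine smul_left_injective 𝕜 hv ?_
    simpa [← hc] using starProjection_eq_self_iff.mpr hvU
  rw [← range_starProjection U, ← hc, hc1, one_smul]
  exact LinearMap.range_id

end Submodule

theorem ContinuousLinearMap.eq_zero_of_adjoint_comp_comp_eq_zero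
    {𝕜 E F ι : Type*} [RCLike 𝕜] [NormedAddCommGroup E] [InnerProductSpace 𝕜 E] [CompleteSpace E]
    [NormedAddCommGroup F] [InnerProductSpace 𝕜 F] [CompleteSpace F] {V : ι → F →L[𝕜] E}
    (hV : Dense (Submodule.span 𝕜 (⋃ i, range (V i)) : Set E)) {D : E →L[𝕜] E}
    (hD : ∀ i j, adjoint (V i) ∘L D ∘L V j = 0) : D = 0 := by
  refine ext_on hV fun y hy => ?_
  obtain ⟨j, ξ, rfl⟩ := mem_iUnion.mp hy
  have hperp : innerSL 𝕜 (D (V j ξ)) = 0 := by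
    refine ext_on hV fun x hx => ?_
    obtain ⟨i, ξ', rfl⟩ := mem_iUnion.mp hx
    have h := congr($(hD i j) ξ)
    simp only [coe_comp, Function.comp_apply, zero_apply] at h
    rw [innerSL_apply_apply, ← adjoint_inner_left, h, inner_zero_left, zero_apply]
  simpa using congr($hperp (D (V j ξ)))

section Representation

variable (π : (H →L[ℂ] H) →⋆ₐ[ℂ] (L →L[ℂ] L))

/-- In the model `L = H ⊗ K`, `π a = a ⊗ 1` and `‖ξ₀‖ = 1`, this is `ξ ↦ ξ ⊗ (⟨ξ₀| ⊗ 1) ζ`,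
and `adjoint (columnMap π ξ₀ η) ∘L u ∘L columnMap π ξ₀ ζ` is a Tomiyama slice of `u`. -/
def columnMap (ξ₀ : H) (ζ : L) : H →L[ℂ] L :=
  apply ℂ L ζ ∘L ⟨π.toAlgHom.toLinearMap, map_continuous π⟩ ∘L (rankOne ℂ).flip ξ₀

@[simp]
theorem columnMap_apply (ξ₀ : H) (ζ : L) (ξ : H) :
    columnMap π ξ₀ ζ ξ = π (rankOne ℂ ξ ξ₀) ζ :=
  rfl

theorem columnMap_comp (ξ₀ : H) (ζ : L) (a : H →L[ℂ] H) :
    columnMap π ξ₀ ζ ∘L a = π a ∘L columnMap π ξ₀ ζ := by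
  ext ξ
  simp only [coe_comp, Function.comp_apply, columnMap_apply, ← comp_rankOne, ← mul_def,
    map_mul]
  rfl

theorem adjoint_columnMap_comp (ξ₀ : H) (η : L) (a : H →L[ℂ] H) :
    adjoint (columnMap π ξ₀ η) ∘L π a = a ∘L adjoint (columnMap π ξ₀ η) := by
  have h := congr(adjoint $(columnMap_comp π ξ₀ η (star a)))
  rw [adjoint_comp, adjoint_comp, ← star_eq_adjoint, ← star_eq_adjoint, ← map_star, star_star]
    at h
  exact h.symm

theorem adjoint_columnMap_comp_comp_mem_centralizer {S : Set (H →L[ℂ] H)} {u : L →L[ℂ] L}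
    (hu : ∀ s ∈ S, Commute (π s) u) (ξ₀ : H) (η ζ : L) :
    adjoint (columnMap π ξ₀ η) ∘L u ∘L columnMap π ξ₀ ζ ∈ centralizer S := by
  intro s hs
  calc s * (adjoint (columnMap π ξ₀ η) ∘L u ∘L columnMap π ξ₀ ζ)
      = adjoint (columnMap π ξ₀ η) ∘L (π s * u) ∘L columnMap π ξ₀ ζ := by
        simp only [mul_def, ← comp_assoc, adjoint_columnMap_comp]
    _ = adjoint (columnMap π ξ₀ η) ∘L (u * π s) ∘L columnMap π ξ₀ ζ := by rw [(hu s hs).eq]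
    _ = (adjoint (columnMap π ξ₀ η) ∘L u ∘L columnMap π ξ₀ ζ) * s := by
        simp only [mul_def, comp_assoc, columnMap_comp]

end Representation

section Irreducible

variable {K : Type*} [NormedAddCommGroup K] [InnerProductSpace ℂ K] [CompleteSpace K]
  (π₁ : (H →L[ℂ] H) →⋆ₐ[ℂ] (L →L[ℂ] L)) (π₂ : (K →L[ℂ] K) →⋆ₐ[ℂ] (L →L[ℂ] L))

theorem dense_span_columnMap (hcomm : ∀ a b, Commute (π₁ a) (π₂ b))
    (hgen : centralizer (range π₁ ∪ range π₂) ⊆ range fun c : ℂ => c • (1 : L →L[ℂ] L))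
    (hinj : Function.Injective π₁) {ξ₀ : H} (hξ₀ : ξ₀ ≠ 0) :
    Dense (Submodule.span ℂ (⋃ ζ, range (columnMap π₁ ξ₀ ζ)) : Set L) := by
  rw [Submodule.dense_iff_topologicalClosure_eq_top]
  refine Submodule.eq_top_of_forall_mem_invtSubmodule ?_ hgen
    (Submodule.isClosed_topologicalClosure _) ?_ ?_
  · rintro _ (⟨a, rfl⟩ | ⟨b, rfl⟩) <;> rw [← star_eq_adjoint, ← map_star]
    exacts [Or.inl ⟨_, rfl⟩, Or.inr ⟨_, rfl⟩]
  · intro T hT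
    refine Submodule.topologicalClosure_mem_invtSubmodule ?_
    rw [mem_invtSubmodule, Submodule.span_le]
    intro _ hv
    obtain ⟨ζ, ξ, rfl⟩ := mem_iUnion.mp hv
    refine Submodule.subset_span (mem_iUnion.mpr ?_)
    rcases hT with ⟨a, rfl⟩ | ⟨b, rfl⟩
    · exact ⟨ζ, a ξ, congr($(columnMap_comp π₁ ξ₀ ζ a) ξ)⟩
    · exact ⟨π₂ b ζ, ξ, congr($((hcomm _ b).eq) ζ)⟩
  · have hne : π₁ (rankOne ℂ ξ₀ ξ₀) ≠ 0 :=
      (map_ne_zero_iff π₁ hinj).mpr (rankOne_ne_zero hξ₀ hξ₀)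
    obtain ⟨ζ₀, hζ₀⟩ := DFunLike.ne_iff.mp hne
    refine (Submodule.ne_bot_iff _).mpr ⟨_, Submodule.le_topologicalClosure _
      (Submodule.subset_span (mem_iUnion.mpr ⟨ζ₀, ξ₀, rfl⟩)), hζ₀⟩

theorem commute_map_of_mem_centralizer_centralizer (hcomm : ∀ a b, Commute (π₁ a) (π₂ b))
    (hgen : centralizer (range π₁ ∪ range π₂) ⊆ range fun c : ℂ => c • (1 : L →L[ℂ] L))
    (hinj : Function.Injective π₁) {S : Set (H →L[ℂ] H)} {u : L →L[ℂ] L}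
    (hu : ∀ s ∈ S, Commute (π₁ s) u) {w : H →L[ℂ] H} (hw : w ∈ centralizer (centralizer S)) :
    Commute (π₁ w) u := by
  rcases subsingleton_or_nontrivial H with hH | hH
  · rw [Subsingleton.elim w 0, map_zero]
    exact Commute.zero_left u
  obtain ⟨ξ₀, hξ₀⟩ := exists_ne (0 : H)
  rw [commute_iff_eq, ← sub_eq_zero]
  refine eq_zero_of_adjoint_comp_comp_eq_zero
    (dense_span_columnMap π₁ π₂ hcomm hgen hinj hξ₀) fun η ζ => ?_
  have h := hw _ (adjoint_columnMap_comp_comp_mem_centralizer π₁ hu ξ₀ η ζ)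
  simp only [mul_def, comp_sub, sub_comp, ← comp_assoc, adjoint_columnMap_comp] at h ⊢
  simp only [comp_assoc, ← columnMap_comp] at h ⊢
  rw [h, sub_self]

end Irreducible

namespace IsCondExp

variable {V : Type*} [NormedAddCommGroup V] [InnerProductSpace ℂ V]
  {M N : Set (V →L[ℂ] V)} {E : (V →L[ℂ] V) → (V →L[ℂ] V)}

theorem restrict (hE : IsCondExp M N E) {M' : Set (V →L[ℂ] V)} (hM' : M' ⊆ M)
    (hmaps : ∀ x ∈ M', E x ∈ M') : IsCondExp M' (M' ∩ N) E where
  subset := inter_subset_left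
  mapsTo x hx := ⟨hmaps x hx, hE.mapsTo x (hM' hx)⟩
  fixes x hx := hE.fixes x hx.2
  map_add x hx y hy := hE.map_add x (hM' hx) y (hM' hy)
  map_smul c x hx := hE.map_smul c x (hM' hx)
  norm_le x hx := hE.norm_le x (hM' hx)
  bimodule s₁ hs₁ s₂ hs₂ t ht := hE.bimodule s₁ hs₁.2 s₂ hs₂.2 t (hM' ht)

theorem commute_apply (hE : IsCondExp M N E) (hN : 1 ∈ N) {s x : V →L[ℂ] V} (hs : s ∈ N)
    (hx : x ∈ M) (hsx : Commute s x) : Commute s (E x) := by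
  have hleft := hE.bimodule s hs 1 hN x hx
  have hright := hE.bimodule 1 hN s hs x hx
  rw [mul_one, mul_one] at hleft
  rw [one_mul, one_mul] at hright
  rw [commute_iff_eq, ← hleft, ← hright, hsx.eq]

end IsCondExp

namespace VonNeumannAlgebra

def inf (S T : VonNeumannAlgebra H) : VonNeumannAlgebra H where
  toStarSubalgebra := S.toStarSubalgebra ⊓ T.toStarSubalgebra
  centralizer_centralizer' := by
    have h : (S.toStarSubalgebra ⊓ T.toStarSubalgebra).carrier
        = centralizer (S.commutant ∪ T.commutant : Set (H →L[ℂ] H)) := by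
      rw [centralizer_union, coe_commutant, coe_commutant, centralizer_centralizer,
        centralizer_centralizer]
      rfl
    rw [h, centralizer_centralizer_centralizer]

theorem coe_inf (S T : VonNeumannAlgebra H) :
    (S.inf T : Set (H →L[ℂ] H)) = (S : Set (H →L[ℂ] H)) ∩ T :=
  rfl

theorem coe_commutant_inf (S T : VonNeumannAlgebra H) :
    ((S.inf T).commutant : Set (H →L[ℂ] H))
      = centralizer (centralizer (S.commutant ∪ T.commutant : Set (H →L[ℂ] H))) := by
  rw [coe_commutant, coe_inf, centralizer_union, coe_commutant, coe_commutant,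
    centralizer_centralizer, centralizer_centralizer]

end VonNeumannAlgebra

namespace VNTensor

variable (e : VNTensor H K L)

theorem tprod_mono_left {S S' : Set (H →L[ℂ] H)} (h : S ⊆ S') (T : Set (K →L[ℂ] K)) :
    e.tprod S T ⊆ e.tprod S' T :=
  centralizer_subset (centralizer_subset (union_subset_union_left _ (image_mono h)))

theorem tprod_eq_centralizer (M₁ : VonNeumannAlgebra H) (M₂ : VonNeumannAlgebra K) :
    e.tprod M₁ M₂ = centralizer (e.π₁ '' M₁.commutant ∪ e.π₂ '' M₂.commutant) := by
  rw [tprod, e.commutation, centralizer_centralizer_centralizer]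

theorem map₁_mem_centralizer {S : Set (H →L[ℂ] H)} (T : Set (K →L[ℂ] K)) {s : H →L[ℂ] H}
    (hs : s ∈ centralizer S) : e.π₁ s ∈ centralizer (e.π₁ '' S ∪ e.π₂ '' T) := by
  rintro _ (⟨a, ha, rfl⟩ | ⟨b, -, rfl⟩)
  · rw [← map_mul, ← map_mul, hs a ha]
  · exact (e.commutes s b).symm

end VNTensor

theorem stmt11_general (e : VNTensor H K L) (A₁ N₁ : VonNeumannAlgebra H)
    (A₂ N₂ : VonNeumannAlgebra K) (A : VonNeumannAlgebra L)
    (h1 : e.tprod (N₁ : Set (H →L[ℂ] H)) (N₂ : Set (K →L[ℂ] K)) ⊆ (A : Set (L →L[ℂ] L)))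
    (h2 : (A : Set (L →L[ℂ] L)) ⊆ e.tprod (A₁ : Set (H →L[ℂ] H)) (A₂ : Set (K →L[ℂ] K)))
    (E : (L →L[ℂ] L) → (L →L[ℂ] L))
    (hE : IsCondExp (e.tprod (A₁ : Set (H →L[ℂ] H)) (A₂ : Set (K →L[ℂ] K)))
      (A : Set (L →L[ℂ] L)) E) :
    IsCondExp
      (e.tprod ((N₁.commutant : Set (H →L[ℂ] H)) ∩ (A₁ : Set (H →L[ℂ] H)))
        (A₂ : Set (K →L[ℂ] K)))
      (e.tprod ((N₁.commutant : Set (H →L[ℂ] H)) ∩ (A₁ : Set (H →L[ℂ] H)))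
        (A₂ : Set (K →L[ℂ] K)) ∩ (A : Set (L →L[ℂ] L))) E := by
  rw [← VonNeumannAlgebra.coe_inf]
  have hsub := e.tprod_mono_left ((N₁.commutant.coe_inf A₁).trans_subset inter_subset_right) A₂
  refine hE.restrict hsub fun x hx => ?_
  have hEx := h2 (hE.mapsTo x (hsub hx))
  rw [e.tprod_eq_centralizer] at hEx ⊢
  have hcomm_N₁ : ∀ s ∈ (N₁ : Set (H →L[ℂ] H)), Commute (e.π₁ s) (E x) := fun s hs =>
    hE.commute_apply (one_mem A) (h1 (subset_centralizer_centralizer (Or.inl ⟨s, hs, rfl⟩)))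
      (hsub hx) (hx _ (e.map₁_mem_centralizer _ fun m hm =>
        (VonNeumannAlgebra.mem_commutant_iff.mp hm.1 s hs).symm))
  rintro _ (⟨w, hw, rfl⟩ | ⟨t, ht, rfl⟩)
  · rw [VonNeumannAlgebra.coe_commutant_inf, N₁.commutant_commutant] at hw
    refine commute_map_of_mem_centralizer_centralizer e.π₁ e.π₂ e.commutes e.generates.subset
      e.injective₁ ?_ hw
    rintro s (hs | hs)
    exacts [hcomm_N₁ s hs, hEx _ (Or.inl ⟨s, hs, rfl⟩)]
  · exact hEx _ (Or.inr ⟨t, ht, rfl⟩)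

/-- A conditional expectation from `A₁ ⊗̄ A₂` onto an intermediate algebra
`N₁ ⊗̄ N₂ ⊆ A ⊆ A₁ ⊗̄ A₂` restricts to a conditional expectation from
`(N₁' ∩ A₁) ⊗̄ A₂` onto `((N₁' ∩ A₁) ⊗̄ A₂) ∩ A`. -/
theorem stmt11 (e : VNTensor H K L) (A₁ N₁ : VonNeumannAlgebra H)
    (A₂ N₂ : VonNeumannAlgebra K) (hN₁ : N₁ ≤ A₁) (hN₂ : N₂ ≤ A₂)
    (A : VonNeumannAlgebra L)
    (h1 : e.tprod (N₁ : Set (H →L[ℂ] H)) (N₂ : Set (K →L[ℂ] K)) ⊆ (A : Set (L →L[ℂ] L)))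
    (h2 : (A : Set (L →L[ℂ] L)) ⊆ e.tprod (A₁ : Set (H →L[ℂ] H)) (A₂ : Set (K →L[ℂ] K)))
    (E : (L →L[ℂ] L) → (L →L[ℂ] L))
    (hE : IsCondExp (e.tprod (A₁ : Set (H →L[ℂ] H)) (A₂ : Set (K →L[ℂ] K)))
      (A : Set (L →L[ℂ] L)) E) :
    IsCondExp
      (e.tprod ((N₁.commutant : Set (H →L[ℂ] H)) ∩ (A₁ : Set (H →L[ℂ] H)))
        (A₂ : Set (K →L[ℂ] K)))
      (e.tprod ((N₁.commutant : Set (H →L[ℂ] H)) ∩ (A₁ : Set (H →L[ℂ] H)))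
        (A₂ : Set (K →L[ℂ] K)) ∩ (A : Set (L →L[ℂ] L))) E :=
  stmt11_general e A₁ N₁ A₂ N₂ A h1 h2 E hE
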